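/- Let H be a complex Hilbert space, ψ ∈ H a unit vector, and U, V : Fin 2 → Fin 2 → (H →L[ℂ] H) unitary operator matrices whose entries *-commute and which satisfy the perfect embezzlement relations for ψ. Let M be the topological closure of the linear span of { ((U 0 0)†)^n ψ : n ∈ ℕ }. Then the restriction of (U 0 0)† to M is a non-unitary isometry: (U 0 0)† maps M into M; ‖(U 0 0)† m‖ = ‖m‖ for every m ∈ M; but (U 0 0)† does not map M onto M. -/

import Mathlib

/-!
Write `A = U 0 0`, `B = U 1 0`, `W = V 0 0` and `S = √2 • W`. Applying the column relation
`A†A + B†B = 1` to `W ψ` and using the embezzlement relations gives `A† ψ = S ψ`; since `A†`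
commutes with `S`, the `A†`-orbit of `ψ` is its `S`-orbit, and since `A A†` commutes with `S`
and fixes `ψ`, it fixes that orbit and hence its closed span `M`. So `A` is a left inverse of `A†`
on `M`, which makes `A†` isometric there. If `A† m = ψ` for some `m ∈ M`, then `m = A ψ` and
`‖A ψ‖ = ‖ψ‖`, so `B ψ = 0` by the column relation; but `V 1 0 (B ψ) = B (V 1 0 ψ) = ψ / √2 ≠ 0`.
-/

open ContinuousLinearMap

/-- A family `U : Fin 2 → Fin 2 → (H →L[ℂ] H)` is a unitary operator matrix. -/
def IsUnitaryOpMatrix {H : Type*} [NormedAddCommGroup H] [InnerProductSpace ℂ H]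
    [CompleteSpace H] {d : ℕ} (U : Fin d → Fin d → (H →L[ℂ] H)) : Prop :=
  (∀ i j, ∑ k, (adjoint (U k i)) ∘L (U k j) = if i = j then (1 : H →L[ℂ] H) else 0) ∧
  (∀ i j, ∑ k, (U i k) ∘L (adjoint (U j k)) = if i = j then (1 : H →L[ℂ] H) else 0)

/-- Two families of bounded operators *-commute entrywise. -/
def StarCommuteFamilies {H : Type*} [NormedAddCommGroup H] [InnerProductSpace ℂ H]
    [CompleteSpace H] {d : ℕ} (U V : Fin d → Fin d → (H →L[ℂ] H)) : Prop :=
  ∀ i j k l, (U i j) ∘L (V k l) = (V k l) ∘L (U i j) ∧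
    (adjoint (U i j)) ∘L (V k l) = (V k l) ∘L (adjoint (U i j))

open scoped InnerProductSpace

section Orbit

variable {R M : Type*} [Semiring R] [AddCommMonoid M] [Module R M] [TopologicalSpace M]

theorem pow_apply_eq_pow_apply_of_commute {T S : M →L[R] M} (hTS : Commute T S) {ψ : M}
    (hψ : T ψ = S ψ) (n : ℕ) : (T ^ n) ψ = (S ^ n) ψ := by
  induction n with
  | zero => rfl
  | succ n ih =>
    rw [pow_succ, mul_apply_eq_comp, hψ, ← mul_apply_eq_comp, (hTS.pow_left n).eq,
      mul_apply_eq_comp, ih, ← mul_apply_eq_comp, ← pow_succ']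

theorem apply_pow_apply_of_commute {P S : M →L[R] M} (hPS : Commute P S) {ψ : M}
    (hψ : P ψ = ψ) (n : ℕ) : P ((S ^ n) ψ) = (S ^ n) ψ := by
  rw [← mul_apply_eq_comp, (hPS.pow_right n).eq, mul_apply_eq_comp, hψ]

variable [ContinuousAdd M] [ContinuousConstSMul R M]

def cyclicSubspace (T : M →L[R] M) (ψ : M) : Submodule R M :=
  (Submodule.span R (Set.range fun n : ℕ => (T ^ n) ψ)).topologicalClosure

theorem pow_apply_mem_cyclicSubspace (T : M →L[R] M) (ψ : M) (n : ℕ) :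
    (T ^ n) ψ ∈ cyclicSubspace T ψ :=
  Submodule.le_topologicalClosure _ (Submodule.subset_span ⟨n, rfl⟩)

theorem apply_mem_cyclicSubspace (T : M →L[R] M) (ψ : M) {m : M}
    (hm : m ∈ cyclicSubspace T ψ) : T m ∈ cyclicSubspace T ψ := by
  have hspan : Submodule.span R (Set.range fun n : ℕ => (T ^ n) ψ) ≤
      (cyclicSubspace T ψ).comap (T : M →ₗ[R] M) := by
    rw [Submodule.span_le]
    rintro _ ⟨n, rfl⟩
    rw [SetLike.mem_coe, Submodule.mem_comap, coe_coe, ← mul_apply_eq_comp, ← pow_succ']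
    exact pow_apply_mem_cyclicSubspace T ψ (n + 1)
  exact Set.MapsTo.closure_left (f := T) (fun x hx => Submodule.mem_comap.1 (hspan hx))
    T.continuous (Submodule.isClosed_topologicalClosure _) hm

theorem apply_eq_self_of_mem_cyclicSubspace [T2Space M] {P T S : M →L[R] M}
    (hPS : Commute P S) (hTS : Commute T S) {ψ : M} (hP : P ψ = ψ) (hT : T ψ = S ψ) {m : M}
    (hm : m ∈ cyclicSubspace T ψ) : P m = m := by
  have horbit : Set.EqOn P (1 : M →L[R] M) (Set.range fun n : ℕ => (T ^ n) ψ) := by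
    rintro _ ⟨n, rfl⟩
    simp only [pow_apply_eq_pow_apply_of_commute hTS hT, one_apply_eq_self,
      apply_pow_apply_of_commute hPS hP]
  exact ContinuousLinearMap.eqOn_closure_span horbit hm

end Orbit

theorem norm_adjoint_apply_of_apply_adjoint_apply {𝕜 E F : Type*} [RCLike 𝕜]
    [NormedAddCommGroup E] [InnerProductSpace 𝕜 E] [CompleteSpace E]
    [NormedAddCommGroup F] [InnerProductSpace 𝕜 F] [CompleteSpace F]
    {A : E →L[𝕜] F} {m : F} (hm : A (adjoint A m) = m) : ‖adjoint A m‖ = ‖m‖ := by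
  have hinner : ⟪adjoint A m, adjoint A m⟫_𝕜 = ⟪m, m⟫_𝕜 := by
    rw [adjoint_inner_left, hm]
  rw [inner_self_eq_norm_sq_to_K, inner_self_eq_norm_sq_to_K] at hinner
  exact (pow_left_inj₀ (norm_nonneg _) (norm_nonneg _) two_ne_zero).1 (by exact_mod_cast hinner)

section HilbertSpace

variable {H : Type*} [NormedAddCommGroup H] [InnerProductSpace ℂ H] [CompleteSpace H]

theorem StarCommuteFamilies.commute {d : ℕ} {U V : Fin d → Fin d → (H →L[ℂ] H)}
    (h : StarCommuteFamilies U V) (i j k l : Fin d) : Commute (U i j) (V k l) :=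
  (h i j k l).1

theorem StarCommuteFamilies.commute_adjoint {d : ℕ} {U V : Fin d → Fin d → (H →L[ℂ] H)}
    (h : StarCommuteFamilies U V) (i j k l : Fin d) : Commute (adjoint (U i j)) (V k l) :=
  (h i j k l).2

namespace IsUnitaryOpMatrix

variable {d : ℕ} {U : Fin d → Fin d → (H →L[ℂ] H)}

theorem sum_adjoint_apply_apply (hU : IsUnitaryOpMatrix U) (j : Fin d) (x : H) :
    ∑ k, adjoint (U k j) (U k j x) = x := by
  simpa using congrArg (· x) (hU.1 j j)

theorem sum_norm_sq_apply (hU : IsUnitaryOpMatrix U) (j : Fin d) (x : H) :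
    ∑ k, ‖U k j x‖ ^ 2 = ‖x‖ ^ 2 := by
  have hinner := congrArg (⟪·, x⟫_ℂ) (hU.sum_adjoint_apply_apply j x)
  simp only [sum_inner, adjoint_inner_left, inner_self_eq_norm_sq_to_K] at hinner
  exact_mod_cast hinner

theorem adjoint_apply_eq_inv_smul {U : Fin 2 → Fin 2 → (H →L[ℂ] H)} (hU : IsUnitaryOpMatrix U)
    {c : ℂ} (hc : c ≠ 0) {φ ψ : H} (h₀ : U 0 0 φ = c • ψ) (h₁ : U 1 0 φ = 0) :
    adjoint (U 0 0) ψ = c⁻¹ • φ := by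
  have hcol := hU.sum_adjoint_apply_apply 0 φ
  rw [Fin.sum_univ_two, h₀, h₁, map_zero, add_zero, map_smul] at hcol
  rw [← hcol, inv_smul_smul₀ hc]

end IsUnitaryOpMatrix

end HilbertSpace

theorem embezzlement_gives_nonunitary_isometry_general
    {H : Type*} [NormedAddCommGroup H] [InnerProductSpace ℂ H] [CompleteSpace H]
    (ψ : H) (hψ : ‖ψ‖ = 1) (U V : Fin 2 → Fin 2 → (H →L[ℂ] H))
    (hU : IsUnitaryOpMatrix U)
    (hUV : StarCommuteFamilies U V)
    (he1 : U 0 0 (V 0 0 ψ) = (1 / Real.sqrt 2 : ℂ) • ψ)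
    (he2 : U 1 0 (V 1 0 ψ) = (1 / Real.sqrt 2 : ℂ) • ψ)
    (he4 : U 1 0 (V 0 0 ψ) = 0) :
    (∀ m ∈ (Submodule.span ℂ
        (Set.range fun n : ℕ => ((adjoint (U 0 0)) ^ n) ψ)).topologicalClosure,
      adjoint (U 0 0) m ∈ (Submodule.span ℂ
        (Set.range fun n : ℕ => ((adjoint (U 0 0)) ^ n) ψ)).topologicalClosure) ∧
    (∀ m ∈ (Submodule.span ℂ
        (Set.range fun n : ℕ => ((adjoint (U 0 0)) ^ n) ψ)).topologicalClosure,
      ‖adjoint (U 0 0) m‖ = ‖m‖) ∧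
    ¬ (∀ y ∈ (Submodule.span ℂ
        (Set.range fun n : ℕ => ((adjoint (U 0 0)) ^ n) ψ)).topologicalClosure,
      ∃ m ∈ (Submodule.span ℂ
        (Set.range fun n : ℕ => ((adjoint (U 0 0)) ^ n) ψ)).topologicalClosure,
      adjoint (U 0 0) m = y) := by
  set A := U 0 0
  set S : H →L[ℂ] H := (Real.sqrt 2 : ℂ) • V 0 0
  have hc : (1 / Real.sqrt 2 : ℂ) ≠ 0 := by simp
  have hTψ : adjoint A ψ = S ψ := by
    rw [hU.adjoint_apply_eq_inv_smul hc he1 he4, one_div, inv_inv, smul_apply]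
  have hTS : Commute (adjoint A) S := (hUV.commute_adjoint 0 0 0 0).smul_right _
  have hPS : Commute (A * adjoint A) S := ((hUV.commute 0 0 0 0).smul_right _).mul_left hTS
  have hPψ : A (adjoint A ψ) = ψ := by
    rw [hTψ, smul_apply, map_smul, he1, smul_smul, mul_one_div_cancel (by simp), one_smul]
  have hleft : ∀ m ∈ cyclicSubspace (adjoint A) ψ, A (adjoint A m) = m := fun m hm =>
    apply_eq_self_of_mem_cyclicSubspace hPS hTS hPψ hTψ hm
  have hisom : ∀ m ∈ cyclicSubspace (adjoint A) ψ, ‖adjoint A m‖ = ‖m‖ := fun m hm =>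
    norm_adjoint_apply_of_apply_adjoint_apply (hleft m hm)
  refine ⟨fun m hm => apply_mem_cyclicSubspace _ ψ hm, hisom, fun hsurj => ?_⟩
  obtain ⟨m, hm, hmψ⟩ := hsurj ψ (pow_apply_mem_cyclicSubspace _ ψ 0)
  have hAψ : ‖A ψ‖ = ‖ψ‖ := by rw [← hmψ, hleft m hm, hisom m hm]
  have hBψ : U 1 0 ψ = 0 := by
    have hcol := hU.sum_norm_sq_apply 0 ψ
    rw [Fin.sum_univ_two, hAψ] at hcol
    simpa using hcol
  have hVBψ : V 1 0 (U 1 0 ψ) = (1 / Real.sqrt 2 : ℂ) • ψ := by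
    rw [← he2, ← mul_apply_eq_comp, ← (hUV.commute 1 0 1 0).eq, mul_apply_eq_comp]
  rw [hBψ, map_zero, eq_comm, smul_eq_zero_iff_right hc] at hVBψ
  simp [hVBψ] at hψ

/-- In a perfect embezzlement protocol, the restriction of `(U 0 0)†` to the closure `M` of
the span of `{((U 0 0)†)^n ψ : n ∈ ℕ}` is a non-unitary isometry: it maps `M` into `M`
isometrically, but not onto `M`. -/
theorem embezzlement_gives_nonunitary_isometry
    {H : Type*} [NormedAddCommGroup H] [InnerProductSpace ℂ H] [CompleteSpace H]
    (ψ : H) (hψ : ‖ψ‖ = 1) (U V : Fin 2 → Fin 2 → (H →L[ℂ] H))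
    (hU : IsUnitaryOpMatrix U) (hV : IsUnitaryOpMatrix V)
    (hUV : StarCommuteFamilies U V)
    (he1 : U 0 0 (V 0 0 ψ) = (1 / Real.sqrt 2 : ℂ) • ψ)
    (he2 : U 1 0 (V 1 0 ψ) = (1 / Real.sqrt 2 : ℂ) • ψ)
    (he3 : U 0 0 (V 1 0 ψ) = 0)
    (he4 : U 1 0 (V 0 0 ψ) = 0) :
    (∀ m ∈ (Submodule.span ℂ
        (Set.range fun n : ℕ => ((adjoint (U 0 0)) ^ n) ψ)).topologicalClosure,
      adjoint (U 0 0) m ∈ (Submodule.span ℂ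
        (Set.range fun n : ℕ => ((adjoint (U 0 0)) ^ n) ψ)).topologicalClosure) ∧
    (∀ m ∈ (Submodule.span ℂ
        (Set.range fun n : ℕ => ((adjoint (U 0 0)) ^ n) ψ)).topologicalClosure,
      ‖adjoint (U 0 0) m‖ = ‖m‖) ∧
    ¬ (∀ y ∈ (Submodule.span ℂ
        (Set.range fun n : ℕ => ((adjoint (U 0 0)) ^ n) ψ)).topologicalClosure,
      ∃ m ∈ (Submodule.span ℂ
        (Set.range fun n : ℕ => ((adjoint (U 0 0)) ^ n) ψ)).topologicalClosure,
      adjoint (U 0 0) m = y) :=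
  embezzlement_gives_nonunitary_isometry_general ψ hψ U V hU hUV he1 he2 he4
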